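/- The Choi–Lam sextic S(x,y,z) = x⁴y² + y⁴z² + z⁴x² − 3x²y²z² is nonnegative on ℝ³, and its zero set is exactly {(x,y,z) : x(y²−z²) = 0, y(z²−x²) = 0, z(x²−y²) = 0}. -/

import Mathlib

/-!
The monomials `x⁴y²`, `y⁴z²`, `z⁴x²` have product `(x²y²z²)³`, so AM-GM gives `S ≥ 0`, with
equality iff each monomial equals `x²y²z²`. With `X = x²`, `Y = y²`, `Z = z²` these equalities read
`XY(X - Z) = YZ(Y - X) = ZX(Z - Y) = 0`, which in a domain is equivalent to
`X(Y - Z) = Y(Z - X) = Z(X - Y) = 0`, i.e. to `Φ₁ = Φ₂ = Φ₃ = 0`.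
-/

open Real Finset

theorem rpow_inv_three_mul_eq_of_mul_eq_pow_three {a b c m : ℝ} (ha : 0 ≤ a) (hb : 0 ≤ b)
    (hc : 0 ≤ c) (hm : 0 ≤ m) (h : a * b * c = m ^ 3) :
    a ^ (3⁻¹ : ℝ) * b ^ (3⁻¹ : ℝ) * c ^ (3⁻¹ : ℝ) = m := by
  rw [← mul_rpow ha hb, ← mul_rpow (mul_nonneg ha hb) hc, h]
  exact_mod_cast pow_rpow_inv_natCast hm three_ne_zero

theorem three_mul_le_add_of_mul_eq_pow_three {a b c m : ℝ} (ha : 0 ≤ a) (hb : 0 ≤ b)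
    (hc : 0 ≤ c) (hm : 0 ≤ m) (h : a * b * c = m ^ 3) : 3 * m ≤ a + b + c := by
  have amgm := geom_mean_le_arith_mean3_weighted (w₁ := 3⁻¹) (w₂ := 3⁻¹) (w₃ := 3⁻¹)
    (by norm_num) (by norm_num) (by norm_num) ha hb hc (by norm_num)
  rw [rpow_inv_three_mul_eq_of_mul_eq_pow_three ha hb hc hm h] at amgm
  linarith

theorem three_mul_eq_add_iff_of_mul_eq_pow_three {a b c m : ℝ} (ha : 0 ≤ a) (hb : 0 ≤ b)
    (hc : 0 ≤ c) (hm : 0 ≤ m) (h : a * b * c = m ^ 3) :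
    3 * m = a + b + c ↔ a = m ∧ b = m ∧ c = m := by
  have amgm_eq := geom_mean_eq_arith_mean_weighted_iff_of_pos' univ (fun _ ↦ (3⁻¹ : ℝ))
    ![a, b, c] (by simp) (by simp) (by simp [Fin.forall_fin_succ, ha, hb, hc])
  simp only [Fin.prod_univ_three, Fin.sum_univ_three, Matrix.cons_val_zero, Matrix.cons_val_one,
    Matrix.cons_val, mem_univ, forall_const, Fin.forall_fin_succ, Matrix.cons_val_succ,
    Matrix.cons_val_fin_one] at amgm_eq
  rw [rpow_inv_three_mul_eq_of_mul_eq_pow_three ha hb hc hm h] at amgm_eq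
  constructor
  · intro hsum
    rw [show 3⁻¹ * a + 3⁻¹ * b + 3⁻¹ * c = m by linarith] at amgm_eq
    exact amgm_eq.mp rfl
  · rintro ⟨rfl, rfl, rfl⟩
    ring

theorem cyclic_mul_sub_eq_zero_iff {R : Type*} [CommRing R] [NoZeroDivisors R] {X Y Z : R} :
    X * Y * (X - Z) = 0 ∧ Y * Z * (Y - X) = 0 ∧ Z * X * (Z - Y) = 0 ↔
      X * (Y - Z) = 0 ∧ Y * (Z - X) = 0 ∧ Z * (X - Y) = 0 := by
  simp only [mul_eq_zero, sub_eq_zero]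
  grind

theorem stmt18 (x y z : ℝ) :
    0 ≤ x ^ 4 * y ^ 2 + y ^ 4 * z ^ 2 + z ^ 4 * x ^ 2 - 3 * x ^ 2 * y ^ 2 * z ^ 2
    ∧ (x ^ 4 * y ^ 2 + y ^ 4 * z ^ 2 + z ^ 4 * x ^ 2 - 3 * x ^ 2 * y ^ 2 * z ^ 2 = 0
        ↔ x * (y ^ 2 - z ^ 2) = 0 ∧ y * (z ^ 2 - x ^ 2) = 0 ∧ z * (x ^ 2 - y ^ 2) = 0) := by
  have hprod : x ^ 4 * y ^ 2 * (y ^ 4 * z ^ 2) * (z ^ 4 * x ^ 2) = (x ^ 2 * y ^ 2 * z ^ 2) ^ 3 := by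
    ring
  have hle := three_mul_le_add_of_mul_eq_pow_three (by positivity) (by positivity)
    (by positivity) (by positivity) hprod
  have heq := three_mul_eq_add_iff_of_mul_eq_pow_three (by positivity) (by positivity)
    (by positivity) (by positivity) hprod
  refine ⟨by linarith, ?_⟩
  calc _ ↔ 3 * (x ^ 2 * y ^ 2 * z ^ 2) = x ^ 4 * y ^ 2 + y ^ 4 * z ^ 2 + z ^ 4 * x ^ 2 := by
        constructor <;> intro h <;> linarith
    _ ↔ x ^ 2 * y ^ 2 * (x ^ 2 - z ^ 2) = 0 ∧ y ^ 2 * z ^ 2 * (y ^ 2 - x ^ 2) = 0 ∧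
          z ^ 2 * x ^ 2 * (z ^ 2 - y ^ 2) = 0 := by
        rw [heq]
        refine and_congr ?_ (and_congr ?_ ?_) <;>
          constructor <;> intro h <;> linear_combination h
    _ ↔ x ^ 2 * (y ^ 2 - z ^ 2) = 0 ∧ y ^ 2 * (z ^ 2 - x ^ 2) = 0 ∧
          z ^ 2 * (x ^ 2 - y ^ 2) = 0 :=
        cyclic_mul_sub_eq_zero_iff
    _ ↔ _ := by simp only [mul_eq_zero, pow_eq_zero_iff two_ne_zero]
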